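/- Let λ ∈ ℂ with |λ| = 1. If n is even, then T(λΔ_m, J_n(0)) = ℂ^{n×m} × ℂ^{m×n}, i.e., the map (S,R) ↦ (λ·S*·Δ_m + J_n(0)·R, R*·J_n(0) + λ·Δ_m·S) with S ∈ ℂ^{m×n}, R ∈ ℂ^{n×m} is surjective. If n is odd, then for every pair (B,A) ∈ ℂ^{n×m} × ℂ^{m×n} there exists exactly one matrix D ∈ ℂ^{n×m} whose nonzero entries are confined to the first row such that (B − D, A) ∈ T(λΔ_m, J_n(0)); that is, ℂ^{n×m} × ℂ^{m×n} = T(λΔ_m, J_n(0)) ⊕_ℝ (V × {0}), where V is the subspace of matrices supported in the first row. -/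

import Mathlib

open Matrix

/-- The `n×n` upper-triangular Jordan block with eigenvalue `l`. -/
noncomputable def Jmat (n : ℕ) (l : ℂ) : Matrix (Fin n) (Fin n) ℂ :=
  Matrix.of fun i j =>
    if (i : ℕ) = (j : ℕ) then l
    else if (j : ℕ) = (i : ℕ) + 1 then 1 else 0

/-- The symmetric matrix `Δ_n`: (1-based) entry `(j,k)` is `1` if `j+k = n+1`,
`i` if `j+k = n+2`, and `0` otherwise. -/
noncomputable def Dmat (n : ℕ) : Matrix (Fin n) (Fin n) ℂ :=
  Matrix.of fun i j =>
    if (i : ℕ) + (j : ℕ) + 1 = n then 1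
    else if (i : ℕ) + (j : ℕ) = n then Complex.I
    else 0

/-- The `2m×2m` block matrix `H_m(l) = [[0, I],[J_m(l), 0]]`. -/
noncomputable def Hmat (m : ℕ) (l : ℂ) : Matrix (Fin m ⊕ Fin m) (Fin m ⊕ Fin m) ℂ :=
  Matrix.fromBlocks 0 1 (Jmat m l) 0

/-- `T(A) = {CᴴA + AC}`, the tangent space to the *congruence class of `A`. -/
def Tset {n : Type*} [Fintype n] (A : Matrix n n ℂ) : Set (Matrix n n ℂ) :=
  {X | ∃ C : Matrix n n ℂ, X = Cᴴ * A + A * C}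

/-- `T(M,N) = {(SᴴM + NR, RᴴN + MS)}`. -/
def Tpair {p q : Type*} [Fintype p] [Fintype q]
    (M : Matrix p p ℂ) (N : Matrix q q ℂ) :
    Set (Matrix q p ℂ × Matrix p q ℂ) :=
  {X | ∃ (S : Matrix p q ℂ) (R : Matrix q p ℂ),
      X = (Sᴴ * M + N * R, Rᴴ * N + M * S)}

/-!
With `M = λ Δ_m` invertible and `K = (Mᴴ)⁻¹ M`, the second component determines `S` from `R`,
and `(B, A) ∈ T(M, J_n(0))` becomes `B - Aᴴ K ∈ range L` for `L R = J R - Jᴴ R K`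
(`tangentOp K`). Row by row, `(L R)_0 = R_1` and `(L R)_{k+1} = R_{k+2} - R_k K`, so where `L R`
vanishes off the first row the rows obey `R_{k+2} = R_k K`, with `R_j = 0` for `j ≥ n`.
As `K` is invertible, running this downwards from `j = n` kills every row of the parity of `n`,
and running it upwards from a vanishing `R_0` or `R_1` kills the rest.
For even `n`, `R_1 = (L R)_0` is the start, so `L` is injective, hence surjective.
For odd `n`, `R_1 = 0` forces `(L R)_0 = 0`, so the range of `L` meets the first-row matrices
trivially, and prescribing `R_0` as well shows that the two together span everything.
-/

section TwoStepRecurrence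

variable {X : Type*} [AddZeroClass X] {f : X →+ X} {r : ℕ → X} {n : ℕ}

lemma eq_zero_of_two_step_of_mod_two_eq (hf : Function.Injective f)
    (hr : ∀ k, n ≤ k → r k = 0) (hrec : ∀ k, k + 1 < n → r (k + 2) = f (r k)) {j : ℕ}
    (hj : j % 2 = n % 2) : r j = 0 := by
  suffices h : ∀ d j, n ≤ j + 2 * d → j % 2 = n % 2 → r j = 0 from h n j (by omega) hj
  intro d
  induction d with
  | zero => exact fun j hjn _ => hr j (by omega)
  | succ d ih =>
    intro j hjd hj
    by_cases hnj : n ≤ j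
    · exact hr j hnj
    · have hstep := hrec j (by omega)
      rw [ih (j + 2) (by omega) (by omega)] at hstep
      exact hf (hstep.symm.trans f.map_zero.symm)

lemma eq_zero_of_two_step_add_two_mul (hr : ∀ k, n ≤ k → r k = 0)
    (hrec : ∀ k, k + 1 < n → r (k + 2) = f (r k)) {b : ℕ} (hb : r b = 0) (k : ℕ) :
    r (b + 2 * k) = 0 := by
  induction k with
  | zero => exact hb
  | succ k ih =>
    by_cases h : b + 2 * k + 1 < n
    · rw [show b + 2 * (k + 1) = b + 2 * k + 2 by ring, hrec _ h, ih, map_zero]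
    · exact hr _ (by omega)

lemma eq_zero_of_two_step (hf : Function.Injective f) (hr : ∀ k, n ≤ k → r k = 0)
    (hrec : ∀ k, k + 1 < n → r (k + 2) = f (r k)) (h : r ((n + 1) % 2) = 0) (j : ℕ) :
    r j = 0 := by
  by_cases hj : j % 2 = n % 2
  · exact eq_zero_of_two_step_of_mod_two_eq hf hr hrec hj
  · rw [show j = (n + 1) % 2 + 2 * (j / 2) by omega]
    exact eq_zero_of_two_step_add_two_mul hr hrec h _

end TwoStepRecurrence

section RowNat

variable {n : ℕ} {ι α : Type*}

def rowNat [Zero α] (R : Matrix (Fin n) ι α) (j : ℕ) : ι → α :=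
  if h : j < n then R ⟨j, h⟩ else 0

lemma rowNat_coe [Zero α] (R : Matrix (Fin n) ι α) (i : Fin n) : rowNat R i = R i :=
  dif_pos i.isLt

lemma rowNat_of_lt [Zero α] (R : Matrix (Fin n) ι α) {j : ℕ} (h : j < n) :
    rowNat R j = R ⟨j, h⟩ :=
  dif_pos h

lemma rowNat_of_le [Zero α] (R : Matrix (Fin n) ι α) {j : ℕ} (h : n ≤ j) : rowNat R j = 0 :=
  dif_neg (by omega)

lemma rowNat_zero [Zero α] (j : ℕ) : rowNat (0 : Matrix (Fin n) ι α) j = 0 := by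
  unfold rowNat
  split_ifs <;> rfl

lemma eq_zero_of_rowNat_eq_zero [Zero α] {R : Matrix (Fin n) ι α} (h : ∀ j, rowNat R j = 0) :
    R = 0 := by
  ext i q
  simpa [rowNat_coe] using congrFun (h i) q

lemma rowNat_sub [AddGroup α] (R R' : Matrix (Fin n) ι α) (j : ℕ) :
    rowNat (R - R') j = rowNat R j - rowNat R' j := by
  unfold rowNat
  split_ifs
  · rfl
  · exact (sub_zero 0).symm

lemma rowNat_mul [Fintype ι] {ι' : Type*} [NonUnitalNonAssocSemiring α]
    (R : Matrix (Fin n) ι α) (K : Matrix ι ι' α) (j : ℕ) :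
    rowNat (R * K) j = rowNat R j ᵥ* K := by
  unfold rowNat
  split_ifs
  · rfl
  · exact (Matrix.zero_vecMul K).symm

lemma sum_ite_val_eq_rowNat [AddCommMonoid α] (R : Matrix (Fin n) ι α) (k : ℕ) (q : ι) :
    ∑ b : Fin n, (if (b : ℕ) = k then R b q else 0) = rowNat R k q := by
  calc ∑ b : Fin n, (if (b : ℕ) = k then R b q else 0)
      = ∑ b : Fin n, (if (b : ℕ) = k then rowNat R b q else 0) := by simp only [rowNat_coe]
    _ = ∑ b ∈ Finset.range n, (if b = k then rowNat R b q else 0) :=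
        Fin.sum_univ_eq_sum_range (fun b => if b = k then rowNat R b q else 0) n
    _ = rowNat R k q := by
        rw [Finset.sum_ite_eq']
        split_ifs with h
        · rfl
        · rw [rowNat_of_le R (by simpa using h)]
          rfl

end RowNat

section JordanShift

variable {n : ℕ} {ι : Type*}

lemma Jmat_zero_apply (i j : Fin n) :
    Jmat n 0 i j = if (j : ℕ) = i + 1 then 1 else 0 := by
  simp only [Jmat, Matrix.of_apply]
  split_ifs <;> first | rfl | omega

lemma rowNat_Jmat_mul [Fintype ι] (X : Matrix (Fin n) ι ℂ) (j : ℕ) :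
    rowNat (Jmat n 0 * X) j = rowNat X (j + 1) := by
  by_cases hj : j < n
  · ext q
    rw [rowNat_of_lt _ hj, Matrix.mul_apply, ← sum_ite_val_eq_rowNat]
    simp only [Jmat_zero_apply, ite_mul, one_mul, zero_mul]
  · rw [rowNat_of_le _ (by omega), rowNat_of_le _ (by omega)]

lemma Jmat_conjTranspose_mul_apply [Fintype ι] (X : Matrix (Fin n) ι ℂ) (i : Fin n) (q : ι) :
    ((Jmat n 0)ᴴ * X) i q = ∑ b : Fin n, if (i : ℕ) = b + 1 then X b q else 0 := by
  simp only [Matrix.mul_apply, Matrix.conjTranspose_apply, Jmat_zero_apply]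
  refine Finset.sum_congr rfl fun b _ => ?_
  split_ifs <;> simp

lemma rowNat_Jmat_conjTranspose_mul_zero [Fintype ι] (X : Matrix (Fin n) ι ℂ) :
    rowNat ((Jmat n 0)ᴴ * X) 0 = 0 := by
  unfold rowNat
  split_ifs
  · ext q
    simp [Jmat_conjTranspose_mul_apply]
  · rfl

lemma rowNat_Jmat_conjTranspose_mul_succ [Fintype ι] (X : Matrix (Fin n) ι ℂ) {j : ℕ}
    (hj : j + 1 < n) : rowNat ((Jmat n 0)ᴴ * X) (j + 1) = rowNat X j := by
  ext q
  rw [rowNat_of_lt _ hj, Jmat_conjTranspose_mul_apply, ← sum_ite_val_eq_rowNat]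
  simp only [add_left_inj, eq_comm]

end JordanShift

section TangentOp

variable {n : ℕ} {ι : Type*} [Fintype ι] {K : Matrix ι ι ℂ}

noncomputable def tangentOp (K : Matrix ι ι ℂ) :
    Matrix (Fin n) ι ℂ →ₗ[ℂ] Matrix (Fin n) ι ℂ where
  toFun R := Jmat n 0 * R - (Jmat n 0)ᴴ * R * K
  map_add' R R' := by
    simp only [Matrix.mul_add, Matrix.add_mul]
    abel
  map_smul' c R := by
    simp only [Matrix.mul_smul, Matrix.smul_mul, smul_sub, RingHom.id_apply]

lemma tangentOp_apply (R : Matrix (Fin n) ι ℂ) :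
    tangentOp K R = Jmat n 0 * R - (Jmat n 0)ᴴ * R * K :=
  rfl

lemma rowNat_tangentOp_zero (R : Matrix (Fin n) ι ℂ) :
    rowNat (tangentOp K R) 0 = rowNat R 1 := by
  rw [tangentOp_apply, rowNat_sub, rowNat_Jmat_mul, rowNat_mul,
    rowNat_Jmat_conjTranspose_mul_zero, Matrix.zero_vecMul, sub_zero]

lemma rowNat_tangentOp_succ (R : Matrix (Fin n) ι ℂ) {k : ℕ} (hk : k + 1 < n) :
    rowNat (tangentOp K R) (k + 1) = rowNat R (k + 2) - rowNat R k ᵥ* K := by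
  rw [tangentOp_apply, rowNat_sub, rowNat_Jmat_mul, rowNat_mul,
    rowNat_Jmat_conjTranspose_mul_succ _ hk]

lemma rowNat_recurrence {R : Matrix (Fin n) ι ℂ}
    (h : ∀ k, rowNat (tangentOp K R) (k + 1) = 0) :
    ∀ k, k + 1 < n → rowNat R (k + 2) = (Matrix.vecMulLinear K).toAddMonoidHom (rowNat R k) :=
  fun k hk => sub_eq_zero.mp ((rowNat_tangentOp_succ R hk).symm.trans (h k))

lemma eq_zero_of_tangentOp_eq_zero [DecidableEq ι] (hK : IsUnit K) {R : Matrix (Fin n) ι ℂ}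
    (h : tangentOp K R = 0) (h₀ : rowNat R ((n + 1) % 2) = 0) : R = 0 :=
  eq_zero_of_rowNat_eq_zero <|
    eq_zero_of_two_step (Matrix.vecMul_injective_of_isUnit hK) (fun _ => rowNat_of_le R)
      (rowNat_recurrence fun _ => h ▸ rowNat_zero _) h₀

end TangentOp

section FirstRow

variable (n : ℕ) (ι : Type*)

def firstRowSubmodule : Submodule ℂ (Matrix (Fin n) ι ℂ) where
  carrier := {D | ∀ (p : Fin n) q, (p : ℕ) ≠ 0 → D p q = 0}
  add_mem' ha hb p q hp := by simp [ha p q hp, hb p q hp]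
  zero_mem' _ _ _ := rfl
  smul_mem' c D hD p q hp := by simp [hD p q hp]

noncomputable def firstRowProj : Matrix (Fin n) ι ℂ →ₗ[ℂ] Matrix (Fin n) ι ℂ where
  toFun R := Matrix.of fun p q => if (p : ℕ) = 0 then R p q else 0
  map_add' R R' := by
    ext p q
    simp only [Matrix.of_apply, Matrix.add_apply]
    split_ifs <;> simp
  map_smul' c R := by
    ext p q
    simp only [Matrix.of_apply, Matrix.smul_apply, RingHom.id_apply]
    split_ifs <;> simp

variable {n ι}

lemma mem_firstRowSubmodule_iff {D : Matrix (Fin n) ι ℂ} :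
    D ∈ firstRowSubmodule n ι ↔ ∀ p q, D p q ≠ 0 → (p : ℕ) = 0 :=
  show (∀ (p : Fin n) q, (p : ℕ) ≠ 0 → D p q = 0) ↔ _ from
    forall₂_congr fun _ _ => not_imp_comm

lemma mem_firstRowSubmodule_iff_rowNat {D : Matrix (Fin n) ι ℂ} :
    D ∈ firstRowSubmodule n ι ↔ ∀ k, rowNat D (k + 1) = 0 := by
  constructor
  · intro hD k
    by_cases hk : k + 1 < n
    · ext q
      rw [rowNat_of_lt D hk]
      exact hD ⟨k + 1, hk⟩ q (Nat.succ_ne_zero k)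
    · exact rowNat_of_le D (by omega)
  · intro hD p q hp
    obtain ⟨k, hk⟩ := Nat.exists_eq_succ_of_ne_zero hp
    have hrow := rowNat_coe D p
    rw [hk, hD] at hrow
    exact (congrFun hrow q).symm

lemma firstRowProj_mem (R : Matrix (Fin n) ι ℂ) :
    firstRowProj n ι R ∈ firstRowSubmodule n ι :=
  fun _ _ hp => if_neg hp

lemma rowNat_sub_firstRowProj_zero (R : Matrix (Fin n) ι ℂ) :
    rowNat (R - firstRowProj n ι R) 0 = 0 := by
  by_cases hn : 0 < n
  · ext q
    rw [rowNat_of_lt _ hn]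
    simp [firstRowProj]
  · exact rowNat_of_le _ (by omega)

end FirstRow

section TangentOpParity

variable {n : ℕ} {ι : Type*} [Fintype ι] [DecidableEq ι] {K : Matrix ι ι ℂ}

lemma tangentOp_surjective (hK : IsUnit K) (hn : Even n) :
    Function.Surjective (tangentOp (n := n) K) := by
  refine LinearMap.injective_iff_surjective.mp <| (injective_iff_map_eq_zero _).mpr fun R hR => ?_
  refine eq_zero_of_tangentOp_eq_zero hK hR ?_
  rw [show (n + 1) % 2 = 1 by grind, ← rowNat_tangentOp_zero, hR, rowNat_zero]

lemma tangentOp_eq_zero_of_mem_firstRowSubmodule (hK : IsUnit K) (hn : Odd n)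
    {R : Matrix (Fin n) ι ℂ} (h : tangentOp K R ∈ firstRowSubmodule n ι) :
    tangentOp K R = 0 := by
  rw [mem_firstRowSubmodule_iff_rowNat] at h
  have hR₁ : rowNat R 1 = 0 :=
    eq_zero_of_two_step_of_mod_two_eq (Matrix.vecMul_injective_of_isUnit hK)
      (fun _ => rowNat_of_le R) (rowNat_recurrence h) (by grind)
  refine eq_zero_of_rowNat_eq_zero fun j => ?_
  cases j with
  | zero => rw [rowNat_tangentOp_zero, hR₁]
  | succ k => exact h k

/-- Its injectivity for odd `n` shows that the first-row matrices complement the range of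
`tangentOp K`. -/
noncomputable def tangentOpAddFirstRowProj (K : Matrix ι ι ℂ) :
    Matrix (Fin n) ι ℂ →ₗ[ℂ] Matrix (Fin n) ι ℂ :=
  tangentOp K ∘ₗ (LinearMap.id - firstRowProj n ι) + firstRowProj n ι

lemma tangentOpAddFirstRowProj_injective (hK : IsUnit K) (hn : Odd n) :
    Function.Injective (tangentOpAddFirstRowProj (n := n) K) := by
  refine (injective_iff_map_eq_zero _).mpr fun R hR => ?_
  set P := firstRowProj n ι R
  have hL : tangentOp K (R - P) = -P := eq_neg_of_add_eq_zero_left hR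
  have hP : P = 0 := by
    have h := tangentOp_eq_zero_of_mem_firstRowSubmodule hK hn
      (hL ▸ neg_mem (firstRowProj_mem R))
    rwa [hL, neg_eq_zero] at h
  have hRP : R - P = 0 :=
    eq_zero_of_tangentOp_eq_zero hK (by rw [hL, hP, neg_zero])
      (by rw [show (n + 1) % 2 = 0 by grind]; exact rowNat_sub_firstRowProj_zero R)
  rwa [hP, sub_zero] at hRP

theorem existsUnique_mem_firstRowSubmodule_sub_mem_range (hK : IsUnit K) (hn : Odd n)
    (X : Matrix (Fin n) ι ℂ) :
    ∃! D, D ∈ firstRowSubmodule n ι ∧ X - D ∈ LinearMap.range (tangentOp K) := by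
  obtain ⟨R, hR⟩ :=
    LinearMap.injective_iff_surjective.mp (tangentOpAddFirstRowProj_injective hK hn) X
  set P := firstRowProj n ι R
  have hXP : tangentOp K (R - P) = X - P := eq_sub_of_add_eq hR
  refine ⟨P, ⟨firstRowProj_mem R, R - P, hXP⟩, ?_⟩
  rintro D ⟨hD, R', hR'⟩
  have hdiff : tangentOp K (R' - (R - P)) = P - D := by
    rw [map_sub, hR', hXP]
    abel
  have h := tangentOp_eq_zero_of_mem_firstRowSubmodule hK hn
    (hdiff ▸ sub_mem (firstRowProj_mem R) hD)
  rw [hdiff, sub_eq_zero] at h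
  exact h.symm

end TangentOpParity

lemma mem_Tpair_iff {p q : Type*} [Fintype p] [DecidableEq p] [Fintype q]
    {M : Matrix p p ℂ} (hM : IsUnit M.det) (N : Matrix q q ℂ) (B : Matrix q p ℂ)
    (A : Matrix p q ℂ) :
    (B, A) ∈ Tpair M N ↔
      ∃ R : Matrix q p ℂ,
        N * R - Nᴴ * R * ((Mᴴ)⁻¹ * M) = B - Aᴴ * ((Mᴴ)⁻¹ * M) := by
  have hMH : IsUnit Mᴴ.det := by
    rw [det_conjTranspose]
    exact hM.star
  constructor
  · rintro ⟨S, R, h⟩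
    obtain ⟨rfl, rfl⟩ := Prod.ext_iff.mp h
    refine ⟨R, ?_⟩
    simp only [conjTranspose_add, conjTranspose_mul, conjTranspose_conjTranspose, Matrix.add_mul,
      Matrix.mul_assoc, mul_nonsing_inv_cancel_left _ _ hMH]
    abel
  · rintro ⟨R, hR⟩
    refine ⟨M⁻¹ * (A - Rᴴ * N), R, Prod.ext ?_ ?_⟩
    · simp only [conjTranspose_mul, conjTranspose_sub, conjTranspose_conjTranspose,
        conjTranspose_nonsing_inv, Matrix.mul_assoc, Matrix.sub_mul] at hR ⊢
      rw [← sub_eq_zero] at hR ⊢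
      rw [← neg_eq_zero, ← hR]
      abel
    · show A = Rᴴ * N + M * (M⁻¹ * (A - Rᴴ * N))
      rw [mul_nonsing_inv_cancel_left _ _ hM, add_sub_cancel]

lemma Dmat_submatrix_rev (n : ℕ) :
    (Dmat n).submatrix Fin.revPerm id = 1 + Complex.I • Jmat n 0 := by
  ext i j
  simp only [Dmat, Matrix.submatrix_apply, Fin.revPerm_apply, id, Matrix.of_apply,
    Matrix.add_apply, Matrix.one_apply, Matrix.smul_apply, Jmat_zero_apply, Fin.ext_iff,
    Fin.val_rev, smul_eq_mul]
  have := i.isLt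
  split_ifs <;> first | omega | simp

lemma isUnit_det_Dmat (n : ℕ) : IsUnit (Dmat n).det := by
  have hdet : ((Dmat n).submatrix Fin.revPerm id).det = 1 := by
    rw [Dmat_submatrix_rev, det_of_isUpperTriangular]
    · simp [Jmat_zero_apply]
    · intro i j hij
      have : (j : ℕ) < i := hij
      simp [Jmat_zero_apply, Matrix.one_apply, Fin.ext_iff]
      rw [if_neg (by omega), if_neg (by omega), add_zero]
  rw [det_permute] at hdet
  exact IsUnit.of_mul_eq_one_right _ hdet

/-- For `|λ| = 1`: if `n` is even then `T(λΔ_m, J_n(0)) = ℂ^{n×m} × ℂ^{m×n}`;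
if `n` is odd then `ℂ^{n×m} × ℂ^{m×n} = T(λΔ_m, J_n(0)) ⊕_ℝ (V × {0})`, where
`V` consists of the matrices supported in the first row. -/
theorem stmt19 (m n : ℕ) (l : ℂ) (hl : ‖l‖ = 1) :
    (n % 2 = 0 →
      ∀ (B : Matrix (Fin n) (Fin m) ℂ) (A : Matrix (Fin m) (Fin n) ℂ),
        ∃ (S : Matrix (Fin m) (Fin n) ℂ) (R : Matrix (Fin n) (Fin m) ℂ),
          B = Sᴴ * (l • Dmat m) + Jmat n 0 * R ∧
          A = Rᴴ * Jmat n 0 + (l • Dmat m) * S) ∧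
    (n % 2 = 1 →
      ∀ (B : Matrix (Fin n) (Fin m) ℂ) (A : Matrix (Fin m) (Fin n) ℂ),
        ∃! D : Matrix (Fin n) (Fin m) ℂ,
          (∀ (p : Fin n) (q : Fin m), D p q ≠ 0 → (p : ℕ) = 0) ∧
          (B - D, A) ∈ Tpair (l • Dmat m) (Jmat n 0)) := by
  have hl0 : l ≠ 0 := norm_ne_zero_iff.mp (hl ▸ one_ne_zero)
  set M := l • Dmat m
  have hM : IsUnit M.det := by
    rw [det_smul]
    exact (hl0.isUnit.pow _).mul (isUnit_det_Dmat m)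
  set K := (Mᴴ)⁻¹ * M
  have hK : IsUnit K := by
    rw [isUnit_iff_isUnit_det, det_mul]
    exact (isUnit_nonsing_inv_det _ (by rw [det_conjTranspose]; exact hM.star)).mul hM
  have hT : ∀ B A,
      (B, A) ∈ Tpair M (Jmat n 0) ↔ B - Aᴴ * K ∈ LinearMap.range (tangentOp K) :=
    fun B A => (mem_Tpair_iff hM _ B A).trans (LinearMap.mem_range (f := tangentOp K)).symm
  refine ⟨fun hn B A => ?_, fun hn B A => ?_⟩
  · obtain ⟨S, R, h⟩ := (hT B A).mpr
      (LinearMap.mem_range.mpr (tangentOp_surjective hK (Nat.even_iff.mpr hn) _))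
    exact ⟨S, R, Prod.ext_iff.mp h⟩
  · simpa only [hT, mem_firstRowSubmodule_iff, sub_right_comm B] using
      existsUnique_mem_firstRowSubmodule_sub_mem_range hK (Nat.odd_iff.mpr hn) (B - Aᴴ * K)
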